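/- arXiv:1304.0056 — 8 statements merged into one kernel-verified Lean document; each statement's English description precedes it below -/
import Mathlib

section
/- Let M be a module over a ring R and let E be an injective hull of M. If M is invariant under every automorphism of E (i.e., φ(M) ⊆ M for all φ ∈ Aut(E)), then for every endomorphism j of E with essential kernel, j(M) ⊆ M. -/
/-! `1 - j` is injective because its kernel meets the essential submodule `ker j` trivially; by
injectivity of `E` it has a left inverse `g`, which fixes `ker j` pointwise and is therefore
injective as well, so `1 - j` is an automorphism `φ`. Then `j x = x - φ x` lies in `M`. -/

/-- A submodule is essential if it intersects every nonzero submodule nontrivially. -/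
def IsEssential {R M : Type*} [Ring R] [AddCommGroup M] [Module R M]
    (N : Submodule R M) : Prop :=
  ∀ K : Submodule R M, K ≠ ⊥ → N ⊓ K ≠ ⊥

theorem IsEssential.eq_bot_of_inf_eq_bot {R M : Type*} [Ring R] [AddCommGroup M] [Module R M]
    {N K : Submodule R M} (hN : IsEssential N) (h : N ⊓ K = ⊥) : K = ⊥ :=
  not_not.mp fun hK => hN K hK h

section OneSub

variable {R E : Type*} [Ring R] [AddCommGroup E] [Module R E] {j : Module.End R E}

theorem ker_inf_ker_one_sub_eq_bot (j : Module.End R E) :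
    LinearMap.ker j ⊓ LinearMap.ker (1 - j) = ⊥ := by
  refine (Submodule.eq_bot_iff _).mpr fun x ⟨hjx, hx⟩ => ?_
  simpa [LinearMap.mem_ker.mp hjx] using LinearMap.mem_ker.mp hx

theorem one_sub_apply_of_mem_ker {x : E} (hx : x ∈ LinearMap.ker j) : (1 - j) x = x := by
  simp [LinearMap.mem_ker.mp hx]

theorem injective_one_sub_of_isEssential_ker (hj : IsEssential (LinearMap.ker j)) :
    Function.Injective ⇑(1 - j) :=
  LinearMap.ker_eq_bot.mp (hj.eq_bot_of_inf_eq_bot (ker_inf_ker_one_sub_eq_bot j))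

theorem ker_eq_bot_of_leftInverse_one_sub (hj : IsEssential (LinearMap.ker j))
    {g : Module.End R E} (hg : Function.LeftInverse g ⇑(1 - j)) : LinearMap.ker g = ⊥ := by
  refine hj.eq_bot_of_inf_eq_bot ((Submodule.eq_bot_iff _).mpr fun x ⟨hjx, hgx⟩ => ?_)
  rw [← hg x, one_sub_apply_of_mem_ker hjx]
  exact LinearMap.mem_ker.mp hgx

theorem bijective_one_sub_of_isEssential_ker (hE : Module.Injective R E)
    (hj : IsEssential (LinearMap.ker j)) : Function.Bijective ⇑(1 - j) := by
  have hinj := injective_one_sub_of_isEssential_ker hj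
  obtain ⟨g, hg⟩ := hE.out (1 - j) hinj LinearMap.id
  have hg_inj : Function.Injective g :=
    LinearMap.ker_eq_bot.mp (ker_eq_bot_of_leftInverse_one_sub hj hg)
  exact ⟨hinj, (Function.LeftInverse.rightInverse_of_injective hg hg_inj).surjective⟩

end OneSub

theorem stmt0_general {R E : Type*} [Ring R] [AddCommGroup E] [Module R E]
    (hE : Module.Injective R E) (M : Submodule R E)
    (hinv : ∀ φ : E ≃ₗ[R] E, ∀ x ∈ M, φ x ∈ M)
    (j : Module.End R E) (hj : IsEssential (LinearMap.ker j)) :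
    ∀ x ∈ M, j x ∈ M := by
  intro x hx
  let φ := LinearEquiv.ofBijective (1 - j) (bijective_one_sub_of_isEssential_ker hE hj)
  have hjx : j x = x - φ x := by simp [φ]
  rw [hjx]
  exact M.sub_mem hx (hinv φ x hx)

/-- If M is invariant under every automorphism of its injective hull E, then M is
invariant under every endomorphism of E with essential kernel. -/
theorem stmt0 {R E : Type*} [Ring R] [AddCommGroup E] [Module R E]
    (hE : Module.Injective R E) (M : Submodule R E)
    (hess : IsEssential M)
    (hinv : ∀ φ : E ≃ₗ[R] E, ∀ x ∈ M, φ x ∈ M)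
    (j : Module.End R E) (hj : IsEssential (LinearMap.ker j)) :
    ∀ x ∈ M, j x ∈ M :=
  stmt0_general hE M hinv j hj
end

section
/- Let M be an automorphism-invariant module with endomorphism ring R. Then idempotents lift modulo the Jacobson radical J(R): for every e' ∈ R with e'² - e' ∈ J(R) there exists an idempotent e ∈ R with e - e' ∈ J(R). -/
theorem Ideal.mem_jacobson_bot_iff_exists_mul_eq_one {A : Type*} [Ring A] {a : A} :
    a ∈ Ideal.jacobson (⊥ : Ideal A) ↔ ∀ b, ∃ c, c * (b * a + 1) = 1 := by
  simp only [Ideal.mem_jacobson_iff, Ideal.mem_bot, sub_eq_zero, mul_add, mul_one, mul_assoc]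

theorem exists_le_maximal_disjoint {α : Type*} [CompleteLattice α] [IsCompactlyGenerated α]
    {a b : α} (h : Disjoint a b) : ∃ c, b ≤ c ∧ Maximal (Disjoint a) c :=
  zorn_le_nonempty₀ {c | Disjoint a c}
    (fun s hs hchain _ _ => ⟨sSup s,
      (hchain.directedOn.disjoint_sSup_right).2 fun _ hz => hs hz, fun _ => le_sSup⟩) b h

section Essential

variable {R E : Type*} [Ring R] [AddCommGroup E] [Module R E]

def Submodule.IsEssentialIn (A X : Submodule R E) : Prop :=
  ∀ x ∈ X, x ≠ 0 → ∃ r : R, r • x ∈ A ∧ r • x ≠ 0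

theorem Submodule.IsEssentialIn.trans {A B C : Submodule R E} (hAB : A.IsEssentialIn B)
    (hBC : B.IsEssentialIn C) : A.IsEssentialIn C := by
  intro x hx hx0
  obtain ⟨r, hrB, hr0⟩ := hBC x hx hx0
  obtain ⟨s, hsA, hs0⟩ := hAB _ hrB hr0
  exact ⟨s * r, by rwa [mul_smul], by rwa [mul_smul]⟩

theorem isEssential_iff_isEssentialIn_top {N : Submodule R E} :
    IsEssential N ↔ N.IsEssentialIn ⊤ := by
  constructor
  · intro h x _ hx
    have hspan : (R ∙ x) ≠ ⊥ := by simpa using hx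
    obtain ⟨y, ⟨hyN, hyx⟩, hy0⟩ := Submodule.ne_bot_iff _ |>.1 (h _ hspan)
    obtain ⟨r, rfl⟩ := Submodule.mem_span_singleton.1 hyx
    exact ⟨r, hyN, hy0⟩
  · intro h K hK
    obtain ⟨x, hxK, hx0⟩ := Submodule.ne_bot_iff _ |>.1 hK
    obtain ⟨r, hrN, hr0⟩ := h x trivial hx0
    exact Submodule.ne_bot_iff _ |>.2 ⟨r • x, ⟨hrN, K.smul_mem r hxK⟩, hr0⟩

theorem IsEssential.exists_smul {N : Submodule R E} (h : IsEssential N) {x : E} (hx : x ≠ 0) :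
    ∃ r : R, r • x ∈ N ∧ r • x ≠ 0 :=
  isEssential_iff_isEssentialIn_top.1 h x trivial hx

theorem IsEssential.mono {N N' : Submodule R E} (h : IsEssential N) (hle : N ≤ N') :
    IsEssential N' :=
  fun K hK hN' => h K hK (le_bot_iff.1 (hN' ▸ inf_le_inf_right K hle))

theorem IsEssential.comap_subtype {N : Submodule R E} (h : IsEssential N) (M : Submodule R E) :
    IsEssential (N.comap M.subtype) := by
  refine isEssential_iff_isEssentialIn_top.2 fun x _ hx => ?_
  obtain ⟨r, hrN, hr0⟩ := h.exists_smul (M.coe_eq_zero.not.2 hx)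
  exact ⟨r, hrN, fun h0 => hr0 (by simpa using congrArg Subtype.val h0)⟩

theorem IsEssential.map_subtype {M : Submodule R E} (hM : IsEssential M)
    {K : Submodule R M} (hK : IsEssential K) : IsEssential (K.map M.subtype) := by
  have hKM : (K.map M.subtype).IsEssentialIn M := fun x hx hx0 => by
    obtain ⟨r, hrK, hr0⟩ := hK.exists_smul (x := ⟨x, hx⟩) (by simpa using hx0)
    exact ⟨r, ⟨_, hrK, rfl⟩, by simpa using hr0⟩
  exact isEssential_iff_isEssentialIn_top.2 (hKM.trans (isEssential_iff_isEssentialIn_top.1 hM))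

end Essential

section Injective

variable {R E : Type*} [Ring R] [AddCommGroup E] [Module R E]

open Submodule LinearMap

theorem Module.Injective.bijective_of_isEssential_range (hE : Module.Injective R E)
    {h : Module.End R E} (hinj : Function.Injective h) (hess : IsEssential (range h)) :
    Function.Bijective h := by
  obtain ⟨r, hr⟩ := hE.out h hinj LinearMap.id
  refine ⟨hinj, fun y => ⟨r y, ?_⟩⟩
  by_contra hne
  obtain ⟨t, ⟨z, hz⟩, ht0⟩ := hess.exists_smul (sub_ne_zero.2 (Ne.symm hne))
  apply ht0
  calc t • (y - h (r y)) = h (r (t • (y - h (r y)))) := by rw [← hz, hr]; rfl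
    _ = 0 := by simp [hr]

theorem Module.Injective.isUnit_one_add_of_isEssential_ker (hE : Module.Injective R E)
    {g : Module.End R E} (hg : IsEssential (ker g)) : IsUnit (1 + g) := by
  have hfix : ∀ x ∈ ker g, (1 + g) x = x := fun x hx => by simpa using hx
  rw [Module.End.isUnit_iff]
  refine hE.bijective_of_isEssential_range ?_ (hg.mono fun x hx => ⟨x, hfix x hx⟩)
  refine (injective_iff_map_eq_zero _).2 fun x hx => by_contra fun hx0 => ?_
  obtain ⟨r, hr, hr0⟩ := hg.exists_smul hx0
  exact hr0 (by rw [← hfix _ hr, map_smul, hx, smul_zero])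

theorem Module.Injective.exists_eqOn_id_of_disjoint (hE : Module.Injective R E)
    {A C : Submodule R E} (h : Disjoint A C) :
    ∃ q : Module.End R E, (∀ a ∈ A, q a = a) ∧ ∀ c ∈ C, q c = 0 := by
  have hinj : Function.Injective (A.subtype.coprod C.subtype) := by
    rw [← ker_eq_bot, ker_coprod_of_disjoint_range _ _ (by simpa using h), ker_subtype,
      ker_subtype, prod_bot]
  obtain ⟨q, hq⟩ := hE.out _ hinj (A.subtype ∘ₗ LinearMap.fst R A C)
  exact ⟨q, fun a ha => by simpa using hq (⟨a, ha⟩, 0),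
    fun c hc => by simpa using hq (0, ⟨c, hc⟩)⟩

theorem Submodule.exists_maximal_isEssentialIn (A : Submodule R E) :
    ∃ A', Maximal (fun X => A ≤ X ∧ A.IsEssentialIn X) A' := by
  obtain ⟨A', -, hA'⟩ := zorn_le_nonempty₀ {X | A ≤ X ∧ A.IsEssentialIn X}
    (fun c hc hchain X hX => ⟨sSup c, ⟨(hc hX).1.trans (le_sSup hX), fun x hx hx0 => by
      obtain ⟨Y, hY, hxY⟩ := (mem_sSup_of_directed ⟨X, hX⟩ hchain.directedOn).1 hx
      exact (hc hY).2 x hxY hx0⟩, fun _ => le_sSup⟩)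
    A ⟨le_rfl, fun x hx hx0 => ⟨1, by simpa using hx, by simpa using hx0⟩⟩
  exact ⟨A', hA'⟩

theorem Module.Injective.exists_isIdempotentElem_of_disjoint (hE : Module.Injective R E)
    {A B : Submodule R E} (h : Disjoint A B) :
    ∃ p : Module.End R E, IsIdempotentElem p ∧ (∀ a ∈ A, p a = a) ∧ (∀ b ∈ B, p b = 0) ∧
      A.IsEssentialIn (range p) := by
  obtain ⟨A', ⟨hAA', hA'⟩, hmax⟩ := A.exists_maximal_isEssentialIn
  have hA'B : Disjoint A' B := by
    refine disjoint_def.2 fun x hxA' hxB => by_contra fun hx0 => ?_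
    obtain ⟨r, hrA, hr0⟩ := hA' x hxA' hx0
    exact hr0 (disjoint_def.1 h _ hrA (B.smul_mem r hxB))
  obtain ⟨C, hBC, hC⟩ := exists_le_maximal_disjoint hA'B
  obtain ⟨q, hqA', hqC⟩ := hE.exists_eqOn_id_of_disjoint hC.prop
  -- A nonzero `q y` has `y ∉ C`, so by maximality of `C` the module `C + R y` meets `A'`.
  have hess : A'.IsEssentialIn (range q) := by
    rintro _ ⟨y, rfl⟩ hy
    have hmeet : ¬Disjoint A' (C ⊔ R ∙ y) := fun hd =>
      hy (hqC y (hC.2 hd le_sup_left (mem_sup_right (mem_span_singleton_self y))))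
    rw [disjoint_def] at hmeet
    push Not at hmeet
    obtain ⟨a, haA', ha, ha0⟩ := hmeet
    obtain ⟨c, hc, _, hs, rfl⟩ := mem_sup.1 ha
    obtain ⟨s, rfl⟩ := mem_span_singleton.1 hs
    have hqa : s • q y = c + s • y := by
      rw [← hqA' _ haA', map_add, hqC c hc, map_smul, zero_add]
    exact ⟨s, hqa ▸ haA', hqa ▸ ha0⟩
  have hrange : range q ≤ A' :=
    hmax ⟨hAA'.trans fun a ha => ⟨a, hqA' a ha⟩, hA'.trans hess⟩ fun a ha => ⟨a, hqA' a ha⟩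
  exact ⟨q, LinearMap.ext fun x => hqA' _ (hrange ⟨x, rfl⟩), fun a ha => hqA' a (hAA' ha),
    fun b hb => hqC b (hBC hb), hA'.trans hess⟩

end Injective

section Automorphisms

variable {R E : Type*} [Ring R] [AddCommGroup E] [Module R E]

open Submodule LinearMap

theorem Module.Injective.exists_isIdempotentElem_isEssential_ker_sub (hE : Module.Injective R E)
    {g : Module.End R E} (hg : IsEssential (ker (g * g - g))) :
    ∃ p : Module.End R E, IsIdempotentElem p ∧ IsEssential (ker (p - g)) := by
  set W := ker (g * g - g)
  have hW : ∀ x ∈ W, g (g x) = g x := fun x hx => sub_eq_zero.1 hx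
  have hdisj : Disjoint (W.map g) (W.map (1 - g)) := by
    refine disjoint_def.2 ?_
    rintro _ ⟨x, hx, rfl⟩ ⟨y, hy, hxy⟩
    have hgy : g ((1 - g) y) = 0 := by simp [hW y hy]
    rw [← hW x hx, ← hxy, hgy]
  obtain ⟨p, hp, hpA, hpB, -⟩ := hE.exists_isIdempotentElem_of_disjoint hdisj
  refine ⟨p, hp, hg.mono fun x hx => ?_⟩
  have hpx : p x = g x := by
    calc p x = p (g x) + p ((1 - g) x) := by rw [← map_add]; simp
      _ = g x := by rw [hpA _ ⟨x, hx, rfl⟩, hpB _ ⟨x, hx, rfl⟩, add_zero]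
  simp [hpx]

-- The two unipotent factors move `x` to `x + g x` and then to `g x`.
theorem Module.Injective.exists_isUnit_eqOn_of_disjoint_map (hE : Module.Injective R E)
    {g : Module.End R E} {X : Submodule R E} (hinj : Disjoint X (ker g))
    (hX : Disjoint X (X.map g)) : ∃ w : Module.End R E, IsUnit w ∧ ∀ x ∈ X, w x = g x := by
  obtain ⟨p, hp, hpX, hpgX, -⟩ := hE.exists_isIdempotentElem_of_disjoint hX
  have hinjX : Function.Injective (g ∘ₗ X.subtype) :=
    (injective_iff_map_eq_zero _).2 fun x hx =>
      Subtype.ext (disjoint_def.1 hinj x x.2 hx)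
  obtain ⟨ψ, hψ⟩ := hE.out _ hinjX X.subtype
  have hp₁ : p * (1 - p) = 0 := by rw [mul_sub, mul_one, hp.eq, sub_self]
  have hp₂ : (1 - p) * p = 0 := by rw [sub_mul, one_mul, hp.eq, sub_self]
  have hN₁ : IsNilpotent ((1 - p) * g * p) :=
    ⟨2, by rw [pow_two, show (1 - p) * g * p * ((1 - p) * g * p) =
      (1 - p) * g * (p * (1 - p)) * g * p by noncomm_ring, hp₁]; simp⟩
  have hN₂ : IsNilpotent (p * ψ * (1 - p)) :=
    ⟨2, by rw [pow_two, show p * ψ * (1 - p) * (p * ψ * (1 - p)) =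
      p * ψ * ((1 - p) * p) * ψ * (1 - p) by noncomm_ring, hp₂]; simp⟩
  refine ⟨(1 - p * ψ * (1 - p)) * (1 + (1 - p) * g * p),
    hN₂.isUnit_one_sub.mul hN₁.isUnit_one_add, fun x hx => ?_⟩
  have hpgx : p (g x) = 0 := hpgX _ ⟨x, hx, rfl⟩
  have hψx : ψ (g x) = x := hψ ⟨x, hx⟩
  simp [hpX x hx, hpgx, hψx]

theorem exists_smul_eq_of_not_disjoint {g : Module.End R E} {x : E}
    (h : ¬Disjoint (R ∙ x) ((R ∙ x).map g)) :
    ∃ s t : R, g (t • x) = s • x ∧ s • x ≠ 0 := by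
  rw [disjoint_def] at h
  push Not at h
  obtain ⟨_, hs, ⟨_, ht, hgt⟩, hs0⟩ := h
  obtain ⟨s, rfl⟩ := mem_span_singleton.1 hs
  obtain ⟨t, rfl⟩ := mem_span_singleton.1 ht
  exact ⟨s, t, hgt, hs0⟩

theorem Module.Injective.isUnit_mul_mul_add_one_sub (hE : Module.Injective R E)
    {p g : Module.End R E} (hp : IsIdempotentElem p) {K : Submodule R E}
    (hpK : ∀ x ∈ K, p x = x) (hKp : K.IsEssentialIn (range p))
    (hg : ∀ x ∈ K, x ≠ 0 → ¬Disjoint (R ∙ x) ((R ∙ x).map g)) :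
    IsUnit (p * g * p + (1 - p)) := by
  have hpp (x : E) : p (p x) = p x := LinearMap.congr_fun hp.eq x
  have hw (x : E) : (p * g * p + (1 - p)) x = p (g (p x)) + (x - p x) := by simp
  have hkey : ∀ y ∈ range p, y ≠ 0 → ∃ a c : R, p (g (a • y)) = c • y ∧ c • y ≠ 0 := by
    intro y hy hy0
    obtain ⟨r, hrK, hr0⟩ := hKp y hy hy0
    obtain ⟨s, t, hgt, hs0⟩ := exists_smul_eq_of_not_disjoint (hg _ hrK hr0)
    refine ⟨t * r, s * r, ?_, by rwa [mul_smul]⟩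
    rw [mul_smul, hgt, hpK _ (K.smul_mem s hrK), mul_smul]
  rw [Module.End.isUnit_iff]
  refine hE.bijective_of_isEssential_range ((injective_iff_map_eq_zero _).2 fun x hx => ?_) ?_
  · rw [hw] at hx
    have hpx : p (g (p x)) = 0 := by simpa [hpp] using congrArg p hx
    have hx' : x = p x := by rw [hpx, zero_add, sub_eq_zero] at hx; exact hx
    by_contra hx0
    obtain ⟨a, c, hac, hc0⟩ := hkey (p x) ⟨x, rfl⟩ (hx' ▸ hx0)
    exact hc0 (by rw [← hac, map_smul, map_smul, hpx, smul_zero])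
  · refine isEssential_iff_isEssentialIn_top.2 fun z _ hz0 => ?_
    by_cases hpz : p z = 0
    · exact ⟨1, ⟨z, by simp [hw, hpz]⟩, by simpa using hz0⟩
    obtain ⟨a, c, hac, hc0⟩ := hkey (p z) ⟨z, rfl⟩ hpz
    refine ⟨c, ⟨a • p z + c • (z - p z), ?_⟩, fun h => hc0 (by simpa using congrArg p h)⟩
    have h₁ : (p * g * p + (1 - p)) (a • p z) = c • p z := by
      have hpa : p (a • p z) = a • p z := by rw [map_smul, hpp]
      rw [hw, hpa, hac, sub_self, add_zero]
    have h₂ : (p * g * p + (1 - p)) (c • (z - p z)) = c • (z - p z) := by simp [hpp]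
    rw [map_add, h₁, h₂, smul_sub, add_sub_cancel]

theorem Module.Injective.exists_isUnit_eqOn (hE : Module.Injective R E) {g : Module.End R E}
    {K : Submodule R E} (hK : K ≠ ⊥) (hinj : Disjoint K (ker g)) :
    ∃ w : Module.End R E, IsUnit w ∧ ∃ X ≤ K, X ≠ ⊥ ∧ ∀ x ∈ X, w x = g x := by
  by_cases h : ∃ x ∈ K, x ≠ 0 ∧ Disjoint (R ∙ x) ((R ∙ x).map g)
  · obtain ⟨x, hxK, hx0, hx⟩ := h
    have hxK' : R ∙ x ≤ K := (span_singleton_le_iff_mem x K).2 hxK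
    obtain ⟨w, hw, hwg⟩ := hE.exists_isUnit_eqOn_of_disjoint_map (hinj.mono_left hxK') hx
    exact ⟨w, hw, R ∙ x, hxK', by simpa using hx0, hwg⟩
  · push Not at h
    obtain ⟨p, hp, hpK, -, hKp⟩ :=
      hE.exists_isIdempotentElem_of_disjoint (disjoint_bot_right (a := K))
    obtain ⟨x, hxK, hx0⟩ := Submodule.ne_bot_iff _ |>.1 hK
    obtain ⟨s, t, hgt, hs0⟩ := exists_smul_eq_of_not_disjoint (h x hxK hx0)
    refine ⟨_, hE.isUnit_mul_mul_add_one_sub hp hpK hKp h, K ⊓ K.comap g, inf_le_left,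
      (Submodule.ne_bot_iff _).2 ⟨t • x, ⟨K.smul_mem t hxK, ?_⟩, ?_⟩, ?_⟩
    · show g (t • x) ∈ K
      rw [hgt]; exact K.smul_mem s hxK
    · rintro h0; rw [h0, map_zero] at hgt; exact hs0 hgt.symm
    · rintro y ⟨hyK, hgy⟩
      simp [hpK y hyK, hpK _ hgy]

end Automorphisms

section Invariant

variable {R E : Type*} [Ring R] [AddCommGroup E] [Module R E] {M : Submodule R E}

open Submodule LinearMap

theorem Module.Injective.exists_extension (hE : Module.Injective R E) (f : Module.End R M) :
    ∃ g : Module.End R E, ∀ m : M, g m = f m :=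
  hE.out M.subtype M.injective_subtype (M.subtype ∘ₗ f)

theorem mapsTo_of_isUnit (hinv : ∀ φ : E ≃ₗ[R] E, ∀ x ∈ M, φ x ∈ M) {u : Module.End R E}
    (hu : IsUnit u) : ∀ x ∈ M, u x ∈ M :=
  hinv (LinearEquiv.ofBijective u ((Module.End.isUnit_iff u).1 hu))

theorem isUnit_restrict_of_isUnit (hinv : ∀ φ : E ≃ₗ[R] E, ∀ x ∈ M, φ x ∈ M)
    {u : Module.End R E} (hu : IsUnit u) (huM : ∀ x ∈ M, u x ∈ M) : IsUnit (u.restrict huM) := by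
  obtain ⟨v, rfl⟩ := hu
  have hvM := mapsTo_of_isUnit hinv (v⁻¹).isUnit
  exact ⟨⟨(↑v : Module.End R E).restrict huM, (↑v⁻¹ : Module.End R E).restrict hvM,
    LinearMap.ext fun m => Subtype.ext (LinearMap.congr_fun v.mul_inv m),
    LinearMap.ext fun m => Subtype.ext (LinearMap.congr_fun v.inv_mul m)⟩, rfl⟩

theorem isUnit_one_add_of_isEssential_ker (hE : Module.Injective R E) (hess : IsEssential M)
    (hinv : ∀ φ : E ≃ₗ[R] E, ∀ x ∈ M, φ x ∈ M) {f : Module.End R M}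
    (hf : IsEssential (ker f)) : IsUnit (1 + f) := by
  obtain ⟨g, hg⟩ := hE.exists_extension f
  have hker : IsEssential (ker g) :=
    (hess.map_subtype hf).mono <| by rintro _ ⟨m, hm, rfl⟩; simp_all
  have hu := hE.isUnit_one_add_of_isEssential_ker hker
  convert isUnit_restrict_of_isUnit hinv hu (mapsTo_of_isUnit hinv hu)
  ext m
  simp [hg]

theorem mem_jacobson_of_isEssential_ker (hE : Module.Injective R E) (hess : IsEssential M)
    (hinv : ∀ φ : E ≃ₗ[R] E, ∀ x ∈ M, φ x ∈ M) {f : Module.End R M}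
    (hf : IsEssential (ker f)) : f ∈ Ideal.jacobson (⊥ : Ideal (Module.End R M)) := by
  refine Ideal.mem_jacobson_bot_iff_exists_mul_eq_one.2 fun b => ?_
  obtain ⟨u, hu⟩ := isUnit_one_add_of_isEssential_ker hE hess hinv
    (hf.mono (ker_le_ker_comp f b) : IsEssential (ker (b * f)))
  exact ⟨↑u⁻¹, by rw [add_comm, ← hu, Units.inv_mul]⟩

theorem isEssential_ker_of_mem_jacobson (hE : Module.Injective R E)
    (hinv : ∀ φ : E ≃ₗ[R] E, ∀ x ∈ M, φ x ∈ M) {f : Module.End R M}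
    (hf : f ∈ Ideal.jacobson (⊥ : Ideal (Module.End R M))) : IsEssential (ker f) := by
  intro K hK hdisj
  obtain ⟨g, hg⟩ := hE.exists_extension f
  have hKE : K.map M.subtype ≠ ⊥ := by
    simpa using (map_injective_of_injective M.injective_subtype).ne hK
  have hdisjE : Disjoint (K.map M.subtype) (ker g) := by
    refine disjoint_def.2 ?_
    rintro _ ⟨m, hmK, rfl⟩ hgm
    have hm : m ∈ ker f ⊓ K := ⟨Subtype.ext (by simpa [hg] using hgm), hmK⟩
    rw [hdisj] at hm
    simpa using hm
  obtain ⟨_, ⟨v, rfl⟩, X, hXK, hX0, hvg⟩ := hE.exists_isUnit_eqOn hKE hdisjE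
  set h := (↑v⁻¹ : Module.End R E).restrict (mapsTo_of_isUnit hinv (v⁻¹).isUnit)
  obtain ⟨z, hz⟩ := Ideal.mem_jacobson_bot_iff_exists_mul_eq_one.1 hf (-h)
  obtain ⟨_, hmX, hm0⟩ := Submodule.ne_bot_iff _ |>.1 hX0
  obtain ⟨m, -, rfl⟩ := hXK hmX
  have hvf : (↑v⁻¹ : Module.End R E) (f m) = m := by
    rw [← hg, ← show (v : Module.End R E) m = g m from hvg _ hmX]
    exact LinearMap.congr_fun v.inv_mul (m : E)
  have hkill : (-h * f + 1) m = 0 := by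
    ext
    simp [h, hvf]
  have hm : m = 0 := by
    rw [← Module.End.one_apply (R := R) m, ← hz, Module.End.mul_apply, hkill, map_zero]
  exact hm0 (by simp [hm])

end Invariant

/-- For an automorphism-invariant module M, idempotents lift modulo J(End(M)). -/
theorem stmt4 {R E : Type*} [Ring R] [AddCommGroup E] [Module R E]
    (hE : Module.Injective R E) (M : Submodule R E)
    (hess : IsEssential M)
    (hinv : ∀ φ : E ≃ₗ[R] E, ∀ x ∈ M, φ x ∈ M) :
    ∀ e' : Module.End R ↥M,
      e' * e' - e' ∈ Ideal.jacobson (⊥ : Ideal (Module.End R ↥M)) →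
      ∃ e : Module.End R ↥M, e * e = e ∧
        e - e' ∈ Ideal.jacobson (⊥ : Ideal (Module.End R ↥M)) := by
  intro e' he'
  obtain ⟨g, hg⟩ := hE.exists_extension e'
  have hgM : ∀ x ∈ M, g x ∈ M := fun x hx => hg ⟨x, hx⟩ ▸ (e' ⟨x, hx⟩).2
  have hker : IsEssential (LinearMap.ker (g * g - g)) :=
    (hess.map_subtype (isEssential_ker_of_mem_jacobson hE hinv he')).mono <| by
      rintro _ ⟨m, hm, rfl⟩
      simpa [hg] using congrArg Subtype.val hm
  obtain ⟨p, hp, hpg⟩ := hE.exists_isIdempotentElem_isEssential_ker_sub hker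
  have hpM : ∀ x ∈ M, p x ∈ M := fun x hx => by
    have hu := mapsTo_of_isUnit hinv (hE.isUnit_one_add_of_isEssential_ker hpg) x hx
    simpa using M.add_mem (M.sub_mem hu hx) (hgM x hx)
  refine ⟨p.restrict hpM, LinearMap.ext fun m => Subtype.ext (LinearMap.congr_fun hp.eq m),
    mem_jacobson_of_isEssential_ker hE hess hinv ((hpg.comap_subtype M).mono fun m hm => ?_)⟩
  ext
  simpa [hg] using hm
end

section
/- Every semiregular ring is an exchange ring. That is, if R/J(R) is von Neumann regular and idempotents lift modulo J(R), then for every a ∈ R there exists an idempotent e ∈ R with e ∈ aR and 1 - e ∈ (1-a)R. -/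
/-!
Regularity of `b = a - a²` modulo `J(R)` yields `x = a + b c (1 - a) ∈ a R` with
`1 - x ∈ (1 - a) R` and `x` idempotent modulo `J(R)`; lift it to an idempotent `e`.
An idempotent `e ≡ x` can be moved into `x R`: `e x e` is invertible in the corner ring `e R e`,
and if `v` is its inverse there, `f = x v` is an idempotent of `x R` with `f ≡ e` and `e f = e`.
Doing this once for `e` and `x`, and once more for `1 - f` and `1 - x`, gives an idempotent
`g ∈ x R` with `1 - g ∈ (1 - x) R`.
-/

section

variable {R : Type*} [Ring R]

theorem isUnit_one_sub_of_mem_jacobson_bot {j : R} (hj : j ∈ Ideal.jacobson (⊥ : Ideal R)) :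
    IsUnit (1 - j) := by
  have exists_left_inv : ∀ k ∈ Ideal.jacobson (⊥ : Ideal R), ∃ u, u * (1 - k) = 1 := by
    intro k hk
    obtain ⟨u, hu⟩ := Ideal.exists_mul_sub_mem_of_sub_one_mem_jacobson (1 - k)
      (by simpa using neg_mem hk)
    exact ⟨u, sub_eq_zero.mp (Ideal.mem_bot.mp hu)⟩
  obtain ⟨u, hu⟩ := exists_left_inv j hj
  have hu_eq : u = 1 + u * j := by rw [← hu]; noncomm_ring
  -- `u = 1 + u j` also has a left inverse, so `u` is a unit with inverse `1 - j`
  obtain ⟨t, ht⟩ := exists_left_inv (-(u * j)) (neg_mem (Ideal.mul_mem_left _ u hj))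
  rw [sub_neg_eq_add, ← hu_eq] at ht
  exact ⟨⟨1 - j, u, left_inv_eq_right_inv ht hu ▸ ht, hu⟩, rfl⟩

theorem exists_isIdempotentElem_mul_eq_of_sub_mem_jacobson {e x : R} (he : IsIdempotentElem e)
    (hx : e - x ∈ Ideal.jacobson (⊥ : Ideal R)) :
    ∃ f r : R, IsIdempotentElem f ∧ f = x * r ∧ e * f = e ∧
      f - e ∈ Ideal.jacobson (⊥ : Ideal R) := by
  have hexe : e - e * x * e ∈ Ideal.jacobson (⊥ : Ideal R) := by
    have : e - e * x * e = e * (e - x) * e := by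
      rw [mul_sub, sub_mul, he.eq, mul_assoc, he.eq]
    rw [this]
    exact Ideal.mul_mem_right _ _ (Ideal.mul_mem_left _ _ hx)
  -- `y` restricts to `e x e` on the corner ring `e R e`, so `e y⁻¹` inverts `e x e` there
  obtain ⟨u, hu⟩ := isUnit_one_sub_of_mem_jacobson_bot hexe
  set y := 1 - (e - e * x * e)
  have hey : e * y = e * x * e := by
    simp only [y, mul_sub, mul_one, ← mul_assoc, he.eq]; abel
  have hye : y * e = e * x * e := by
    simp only [y, sub_mul, one_mul, mul_assoc, he.eq]; abel
  set w : R := ↑u⁻¹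
  have hwy : w * y = 1 := by rw [← hu]; exact u.inv_mul
  have hyw : y * w = 1 := by rw [← hu]; exact u.mul_inv
  have hew : e * w = w * e := calc
    e * w = w * y * e * w := by rw [hwy, one_mul]
    _ = w * (e * y) * w := by rw [mul_assoc w y e, hye, ← hey]
    _ = w * e := by rw [mul_assoc, mul_assoc, hyw, mul_one]
  have hfe : e * (x * (e * w)) = e := by
    rw [← mul_assoc, ← mul_assoc, ← hey, mul_assoc, hyw, mul_one]
  have hff : e * w * (x * (e * w)) = e * w := calc
    e * w * (x * (e * w)) = w * (y * e) * w := by rw [hye]; nth_rw 1 [hew]; simp only [mul_assoc]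
    _ = e * w := by rw [← mul_assoc w y e, hwy, one_mul]
  refine ⟨x * (e * w), e * w, by rw [IsIdempotentElem, mul_assoc, hff], rfl, hfe, ?_⟩
  have : x * (e * w) - e = (1 - e) * (x - e) * (e * w) := calc
    x * (e * w) - e = x * (e * w) - e * (x * (e * w)) := by rw [hfe]
    _ = (1 - e) * (x - e) * (e * w) := by
      rw [mul_sub (1 - e), he.one_sub_mul_self, sub_zero]; noncomm_ring
  rw [this]
  exact Ideal.mul_mem_right _ _ (Ideal.mul_mem_left _ _ (sub_mem_comm_iff.mp hx))

def IsExchangeElem (a : R) : Prop :=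
  ∃ e : R, IsIdempotentElem e ∧ a ∣ e ∧ 1 - a ∣ 1 - e

theorem IsExchangeElem.of_dvd {a x : R} (hx : IsExchangeElem x) (hax : a ∣ x)
    (hax' : 1 - a ∣ 1 - x) : IsExchangeElem a :=
  let ⟨e, he, hxe, hxe'⟩ := hx
  ⟨e, he, hax.trans hxe, hax'.trans hxe'⟩

theorem isExchangeElem_of_sub_mem_jacobson {e x : R} (he : IsIdempotentElem e)
    (hx : e - x ∈ Ideal.jacobson (⊥ : Ideal R)) : IsExchangeElem x := by
  obtain ⟨f, r, hf, hfx, -, hfe⟩ := exists_isIdempotentElem_mul_eq_of_sub_mem_jacobson he hx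
  have hf' : (1 - f) - (1 - x) ∈ Ideal.jacobson (⊥ : Ideal R) := by
    rw [sub_sub_sub_cancel_left, ← sub_sub_sub_cancel_right x f e]
    exact sub_mem (sub_mem_comm_iff.mp hx) hfe
  obtain ⟨g, s, hg, hgx, hfg, -⟩ :=
    exists_isIdempotentElem_mul_eq_of_sub_mem_jacobson hf.one_sub hf'
  -- `(1 - f) g = 1 - f` puts `1 - g` into `f R ⊆ x R`
  have hfg' : f * g = g - (1 - f) := by rw [← hfg, sub_mul, one_mul, sub_sub_cancel]
  refine ⟨1 - g, hg.one_sub, ⟨r * (1 - g), ?_⟩, ⟨s, by rw [sub_sub_cancel, hgx]⟩⟩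
  calc 1 - g = f * (1 - g) := by rw [mul_sub, mul_one, hfg']; abel
    _ = x * (r * (1 - g)) := by rw [hfx, mul_assoc]

end

/-- Every semiregular ring is an exchange ring: if R/J(R) is von Neumann regular
and idempotents lift modulo J(R), then for every a there is an idempotent
e ∈ aR with 1 - e ∈ (1-a)R. -/
theorem stmt6 {R : Type*} [Ring R]
    (hreg : ∀ a : R, ∃ b : R, a * b * a - a ∈ Ideal.jacobson (⊥ : Ideal R))
    (hlift : ∀ e' : R, e' * e' - e' ∈ Ideal.jacobson (⊥ : Ideal R) →
      ∃ e : R, e * e = e ∧ e - e' ∈ Ideal.jacobson (⊥ : Ideal R)) :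
    ∀ a : R, ∃ e r s : R, e * e = e ∧ e = a * r ∧ 1 - e = (1 - a) * s := by
  intro a
  obtain ⟨c, hc⟩ := hreg (a - a * a)
  -- `a * r = a + b c (1 - a)` for `b = a - a²`
  set r := 1 + (1 - a) * c * (1 - a)
  have hsq : a * r * (a * r) - a * r = ((a - a * a) * c * (a - a * a) - (a - a * a)) * r := by
    simp only [r]; noncomm_ring
  have hcompl : 1 - a * r = (1 - a) * (1 - a * c * (1 - a)) := by
    simp only [r]; noncomm_ring
  obtain ⟨e, he, hex⟩ := hlift (a * r) (hsq ▸ Ideal.mul_mem_right r _ hc)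
  obtain ⟨f, hf, ⟨r', hr'⟩, ⟨s', hs'⟩⟩ := (isExchangeElem_of_sub_mem_jacobson he hex).of_dvd
    (dvd_mul_right a r) (hcompl ▸ dvd_mul_right _ _)
  exact ⟨f, r', s', hf, hr', hs'⟩
end

section
/- An exchange ring in which all idempotents are central is a clean ring: every element is the sum of an idempotent and a unit. -/
/-!
Take `e = ar` idempotent with `1 - e = (1 - a)s`. Since `e` is central, `R = eR × (1 - e)R` as
rings, and `a - (1 - e)` has components `ea` and `(1 - e)(a - 1)`, with right inverses `re` and
`-s(1 - e)`. With all idempotents central, one-sided inverses are two-sided, so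
`a = (1 - e) + (a - (1 - e))` is a clean decomposition.
-/

/-- `yx` is idempotent whenever `xy = 1`, and its centrality forces `yx = xy`. -/
theorem IsDedekindFiniteMonoid.of_forall_isIdempotentElem_commute {M : Type*} [Monoid M]
    (hcentral : ∀ e : M, IsIdempotentElem e → ∀ x, Commute e x) : IsDedekindFiniteMonoid M where
  mul_eq_one_symm {x y} h := by
    have hidem : IsIdempotentElem (y * x) := by
      rw [IsIdempotentElem, mul_assoc, ← mul_assoc x, h, one_mul]
    have hx : x * (y * x) = x := by rw [← mul_assoc, h, one_mul]
    calc y * x = y * x * (x * y) := by rw [h, mul_one]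
      _ = x * (y * x) * y := by rw [← mul_assoc, (hcentral _ hidem x).eq]
      _ = 1 := by rw [hx, h]

theorem IsIdempotentElem.sub_one_sub_mul_eq_one {R : Type*} [Ring R] {e a r s : R}
    (he : IsIdempotentElem e) (hc : ∀ x, Commute e x) (har : a * r = e)
    (has : (1 - a) * s = 1 - e) : (a - (1 - e)) * (r * e - s * (1 - e)) = 1 := by
  have hc' : ∀ x, Commute (1 - e) x := fun x => (Commute.one_left x).sub_left (hc x)
  calc (a - (1 - e)) * (r * e - s * (1 - e))
      = a * r * e - (s * (1 - e) - (1 - a) * s * (1 - e)) - (1 - e) * r * e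
          + (1 - e) * s * (1 - e) := by noncomm_ring
    _ = e * e - (s * (1 - e) - (1 - e) * (1 - e)) - r * ((1 - e) * e)
          + s * ((1 - e) * (1 - e)) := by
        rw [har, has, (hc' r).eq, (hc' s).eq, mul_assoc r, mul_assoc s]
    _ = 1 := by rw [he.eq, he.one_sub.eq, he.one_sub_mul_self, mul_zero]; abel

/-- An exchange ring in which all idempotents are central is clean. -/
theorem stmt8 {R : Type*} [Ring R]
    (hex : ∀ a : R, ∃ e r s : R, e * e = e ∧ e = a * r ∧ 1 - e = (1 - a) * s)
    (hcentral : ∀ e : R, e * e = e → ∀ x : R, e * x = x * e) :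
    ∀ a : R, ∃ (e : R) (u : Rˣ), e * e = e ∧ a = e + u := by
  have := IsDedekindFiniteMonoid.of_forall_isIdempotentElem_commute hcentral
  intro a
  obtain ⟨e, r, s, he, her, hes⟩ := hex a
  refine ⟨1 - e, .mkOfMulEqOne _ _ (IsIdempotentElem.sub_one_sub_mul_eq_one he (hcentral e he)
    her.symm hes.symm), IsIdempotentElem.one_sub he, ?_⟩
  rw [Units.val_mkOfMulEqOne, add_sub_cancel]
end

section
/- Let R be a ring such that R/J(R) is a clean ring and idempotents lift modulo J(R). Then R is a clean ring. -/
/-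
Write `J` for the Jacobson radical. Given `a`, cleanness of `R/J` gives `a ≡ e' + u₀ (mod J)`
with `e'` idempotent and `u₀` a unit modulo `J`; lift `e'` to an idempotent `e ≡ e' (mod J)`.
Units lift modulo `J` because `1 + J` consists of units, so `u₀` is a unit of `R`, and then
`a - e ∈ u₀ + J` is a unit as well. Hence `a = e + (a - e)` is clean.
-/

theorem isUnit_of_isUnit_mul_of_isUnit_mul {M : Type*} [Monoid M] {x y : M}
    (hxy : IsUnit (x * y)) (hyx : IsUnit (y * x)) : IsUnit x :=
  isUnit_iff_exists_and_exists.mpr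
    ⟨⟨y * hxy.unit⁻¹, by rw [← mul_assoc, IsUnit.mul_val_inv]⟩,
      ⟨hyx.unit⁻¹ * y, by rw [mul_assoc, IsUnit.val_inv_mul]⟩⟩

namespace Ideal

variable {R : Type*} [Ring R]

theorem isUnit_one_add_of_mem_jacobson_bot {x : R} (hx : x ∈ jacobson (⊥ : Ideal R)) :
    IsUnit (1 + x) := by
  obtain ⟨s, hs⟩ := exists_mul_add_sub_mem_of_mem_jacobson x hx
  rw [mem_bot, sub_eq_zero, add_comm] at hs
  -- `s = 1 - s * x`, so `s` itself has a left inverse, and it must be `1 + x`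
  have hs_sub : s - 1 ∈ jacobson (⊥ : Ideal R) := by
    have : s - 1 = -(s * x) := by
      rw [eq_neg_iff_add_eq_zero, ← hs]
      noncomm_ring
    exact this ▸ neg_mem (mul_mem_left _ s hx)
  obtain ⟨t, ht⟩ := exists_mul_sub_mem_of_sub_one_mem_jacobson s hs_sub
  rw [mem_bot, sub_eq_zero] at ht
  have ht_eq : t = 1 + x := left_inv_eq_right_inv ht hs
  exact isUnit_iff_exists.mpr ⟨s, ht_eq ▸ ht, hs⟩

theorem _root_.IsUnit.add_of_mem_jacobson_bot {u x : R} (hu : IsUnit u)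
    (hx : x ∈ jacobson (⊥ : Ideal R)) : IsUnit (u + x) := by
  have hfactor : u + x = u * (1 + (hu.unit⁻¹ : Rˣ) * x) := by
    rw [mul_add, mul_one, ← mul_assoc, IsUnit.mul_val_inv, one_mul]
  rw [hfactor]
  exact hu.mul (isUnit_one_add_of_mem_jacobson_bot (mul_mem_left _ _ hx))

theorem isUnit_of_mul_sub_one_mem_jacobson_bot {u v : R}
    (huv : u * v - 1 ∈ jacobson (⊥ : Ideal R)) (hvu : v * u - 1 ∈ jacobson (⊥ : Ideal R)) :
    IsUnit u :=
  isUnit_of_isUnit_mul_of_isUnit_mul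
    (by simpa using isUnit_one_add_of_mem_jacobson_bot huv)
    (by simpa using isUnit_one_add_of_mem_jacobson_bot hvu)

end Ideal

/-- If R/J(R) is clean and idempotents lift modulo J(R), then R is clean. -/
theorem stmt9 {R : Type*} [Ring R]
    (hclean : ∀ a : R, ∃ e u v : R,
      e * e - e ∈ Ideal.jacobson (⊥ : Ideal R) ∧
      u * v - 1 ∈ Ideal.jacobson (⊥ : Ideal R) ∧
      v * u - 1 ∈ Ideal.jacobson (⊥ : Ideal R) ∧
      a - (e + u) ∈ Ideal.jacobson (⊥ : Ideal R))
    (hlift : ∀ e' : R, e' * e' - e' ∈ Ideal.jacobson (⊥ : Ideal R) →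
      ∃ e : R, e * e = e ∧ e - e' ∈ Ideal.jacobson (⊥ : Ideal R)) :
    ∀ a : R, ∃ (e : R) (u : Rˣ), e * e = e ∧ a = e + u := by
  intro a
  obtain ⟨e', u₀, v, he', huv, hvu, ha⟩ := hclean a
  obtain ⟨e, he, hee'⟩ := hlift e' he'
  have hdiff : a - e - u₀ ∈ Ideal.jacobson (⊥ : Ideal R) := by
    have : a - e - u₀ = (a - (e' + u₀)) - (e - e') := by abel
    exact this ▸ sub_mem ha hee'
  have hunit : IsUnit (a - e) := by
    simpa using
      (Ideal.isUnit_of_mul_sub_one_mem_jacobson_bot huv hvu).add_of_mem_jacobson_bot hdiff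
  exact ⟨e, hunit.unit, he, by rw [IsUnit.unit_spec]; abel⟩
end

section
/- Let R be a ring such that R/J(R) is unit-regular and idempotents lift modulo J(R). If M is a module with End(M) ≅ R, then M satisfies internal cancellation: whenever M = A₁ ⊕ B₁ = A₂ ⊕ B₂ with A₁ ≅ A₂, then B₁ ≅ B₂. -/
/-!
If `A₁ ≅ A₂`, the endomorphism `a` of `M` that is this isomorphism on `A₁` and zero on `B₁` is
von Neumann regular, with kernel `B₁` and image `A₂`. Lifting unit-regularity from `S/J(S)` shows
that every regular element of `S ≅ End(M)` is unit-regular, so `a = a w a` for an automorphism `w`.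
Then `w a` is idempotent with kernel `B₁` and image `w(A₂)`, whence
`B₁ ≅ M / w(A₂) ≅ M / A₂ ≅ B₂`.
-/

section

variable {S : Type*} [Ring S]

theorem isUnit_one_add_of_mem_jacobson_bot {j : S} (hj : j ∈ Ideal.jacobson (⊥ : Ideal S)) :
    IsUnit (1 + j) := by
  obtain ⟨z, hz⟩ := Ideal.exists_mul_add_sub_mem_of_mem_jacobson j hj
  rw [Ideal.mem_bot, sub_eq_zero, add_comm] at hz
  have hz' : -(z * j) + 1 = z := by rw [← hz]; noncomm_ring
  obtain ⟨t, ht⟩ := Ideal.exists_mul_add_sub_mem_of_mem_jacobson _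
    (neg_mem (Ideal.mul_mem_left _ z hj))
  rw [Ideal.mem_bot, sub_eq_zero, hz'] at ht
  exact ⟨⟨1 + j, z, left_inv_eq_right_inv ht hz ▸ ht, hz⟩, rfl⟩

theorem isUnit_one_sub_of_mul_self_mem_jacobson_bot {n : S}
    (hn : n * n ∈ Ideal.jacobson (⊥ : Ideal S)) : IsUnit (1 - n) := by
  have hcomm : Commute (1 - n) (1 + n) := by
    simp only [Commute, SemiconjBy]; noncomm_ring
  have hprod : (1 - n) * (1 + n) = 1 + -(n * n) := by noncomm_ring
  have := isUnit_one_add_of_mem_jacobson_bot (neg_mem hn)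
  rw [← hprod, hcomm.isUnit_mul_iff] at this
  exact this.1

theorem exists_unit_mul_mul_eq_of_mul_mul_eq
    (hur : ∀ x : S, ∃ u : Sˣ, x * u * x - x ∈ Ideal.jacobson (⊥ : Ideal S))
    {a x : S} (hax : a * x * a = a) : ∃ v : Sˣ, a * v * a = a := by
  obtain ⟨u, hu⟩ := hur a
  -- `u` is only a unit inverse of `a` modulo `J`; it is corrected by the unit `1 - n`,
  -- `n = a x (1 - a u)`, which satisfies `a x (1 - n) = a u` and `n² ∈ J`.
  have hn : (a * x * (1 - a * u)) * (a * x * (1 - a * u)) ∈ Ideal.jacobson (⊥ : Ideal S) := by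
    have : (a * x * (1 - a * u)) * (a * x * (1 - a * u))
        = a * x * -(a * u * a - a) * (x * (1 - a * u)) := by noncomm_ring
    rw [this]
    exact Ideal.mul_mem_right _ _ (Ideal.mul_mem_left _ _ (neg_mem hu))
  obtain ⟨w, hw⟩ := isUnit_one_sub_of_mul_self_mem_jacobson_bot hn
  have hxw : a * x * w = a * u := calc
    a * x * w = a * x - (a * x * a) * x * (1 - a * u) := by rw [hw]; noncomm_ring
    _ = a * x - a * x * (1 - a * u) := by rw [hax]
    _ = a * x * a * u := by noncomm_ring
    _ = a * u := by rw [hax]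
  refine ⟨u * w⁻¹, ?_⟩
  calc a * ↑(u * w⁻¹) * a = a * u * ↑w⁻¹ * a := by rw [Units.val_mul, ← mul_assoc]
    _ = a * x * (w * ↑w⁻¹) * a := by rw [← hxw, mul_assoc (a * x)]
    _ = a := by rw [Units.mul_inv, mul_one, hax]

end

section

variable {R M : Type*} [Ring R] [AddCommGroup M] [Module R M]

namespace Submodule

noncomputable def extendByZero {A₁ B₁ A₂ : Submodule R M} (h₁ : IsCompl A₁ B₁)
    (e : A₁ ≃ₗ[R] A₂) : Module.End R M :=
  A₂.subtype ∘ₗ e.toLinearMap ∘ₗ A₁.projectionOnto B₁ h₁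

variable {A₁ B₁ A₂ B₂ : Submodule R M}

theorem ker_extendByZero (h₁ : IsCompl A₁ B₁) (e : A₁ ≃ₗ[R] A₂) :
    LinearMap.ker (extendByZero h₁ e) = B₁ := by
  rw [extendByZero, LinearMap.ker_comp_of_ker_eq_bot _ A₂.ker_subtype, LinearEquiv.ker_comp,
    ker_projectionOnto]

theorem range_extendByZero (h₁ : IsCompl A₁ B₁) (e : A₁ ≃ₗ[R] A₂) :
    LinearMap.range (extendByZero h₁ e) = A₂ := by
  rw [extendByZero, LinearMap.range_comp, LinearMap.range_comp_of_range_eq_top _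
    (range_projectionOnto h₁), LinearEquiv.range, Submodule.map_top, range_subtype]

theorem extendByZero_mul_extendByZero_symm_mul (h₁ : IsCompl A₁ B₁) (h₂ : IsCompl A₂ B₂)
    (e : A₁ ≃ₗ[R] A₂) :
    extendByZero h₁ e * extendByZero h₂ e.symm * extendByZero h₁ e = extendByZero h₁ e := by
  ext m
  simp [extendByZero, -coe_projectionOnto_apply]

end Submodule

theorem Module.End.nonempty_quotient_range_equiv_ker {a : Module.End R M}
    (W : (Module.End R M)ˣ) (h : a * W * a = a) :
    Nonempty ((M ⧸ LinearMap.range a) ≃ₗ[R] LinearMap.ker a) := by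
  let e := LinearMap.GeneralLinearGroup.toLinearEquiv W
  have hf : IsIdempotentElem (e.toLinearMap ∘ₗ a) := by
    change W * a * (W * a) = W * a
    rw [mul_assoc, ← mul_assoc a, h]
  have hker : LinearMap.ker (e.toLinearMap ∘ₗ a) = LinearMap.ker a := LinearEquiv.ker_comp e a
  have hrange : (LinearMap.range a).map e.toLinearMap = LinearMap.range (e.toLinearMap ∘ₗ a) :=
    (LinearMap.range_comp a e.toLinearMap).symm
  exact ⟨(Submodule.Quotient.equiv _ _ e hrange).trans <|
    (Submodule.quotientEquivOfIsCompl _ _ (LinearMap.IsIdempotentElem.isCompl hf)).trans <|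
      LinearEquiv.ofEq _ _ hker⟩

end

theorem stmt14_general {S : Type*} [Ring S]
    (hur : ∀ x : S, ∃ u : Sˣ, x * (u : S) * x - x ∈ Ideal.jacobson (⊥ : Ideal S))
    {R M : Type*} [Ring R] [AddCommGroup M] [Module R M]
    (hiso : Nonempty (Module.End R M ≃+* S)) :
    ∀ (A₁ B₁ A₂ B₂ : Submodule R M), IsCompl A₁ B₁ → IsCompl A₂ B₂ →
      Nonempty (↥A₁ ≃ₗ[R] ↥A₂) → Nonempty (↥B₁ ≃ₗ[R] ↥B₂) := by
  rintro A₁ B₁ A₂ B₂ h₁ h₂ ⟨e⟩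
  obtain ⟨φ⟩ := hiso
  have hreg : φ (Submodule.extendByZero h₁ e) * φ (Submodule.extendByZero h₂ e.symm) *
      φ (Submodule.extendByZero h₁ e) = φ (Submodule.extendByZero h₁ e) := by
    rw [← map_mul, ← map_mul, Submodule.extendByZero_mul_extendByZero_symm_mul]
  obtain ⟨v, hv⟩ := exists_unit_mul_mul_eq_of_mul_mul_eq hur hreg
  have hunitreg : Submodule.extendByZero h₁ e * ↑(Units.map φ.symm.toMonoidHom v) *
      Submodule.extendByZero h₁ e = Submodule.extendByZero h₁ e :=
    φ.injective (by simpa using hv)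
  obtain ⟨ψ⟩ := Module.End.nonempty_quotient_range_equiv_ker _ hunitreg
  rw [Submodule.range_extendByZero, Submodule.ker_extendByZero] at ψ
  exact ⟨ψ.symm.trans (A₂.quotientEquivOfIsCompl B₂ h₂)⟩

/-- If S is a ring with S/J(S) unit-regular and idempotents lifting modulo J(S),
then any module M with End(M) ≅ S satisfies internal cancellation. -/
theorem stmt14 {S : Type*} [Ring S]
    (hur : ∀ x : S, ∃ u : Sˣ, x * (u : S) * x - x ∈ Ideal.jacobson (⊥ : Ideal S))
    (hlift : ∀ e' : S, e' * e' - e' ∈ Ideal.jacobson (⊥ : Ideal S) →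
      ∃ e : S, e * e = e ∧ e - e' ∈ Ideal.jacobson (⊥ : Ideal S))
    {R M : Type*} [Ring R] [AddCommGroup M] [Module R M]
    (hiso : Nonempty (Module.End R M ≃+* S)) :
    ∀ (A₁ B₁ A₂ B₂ : Submodule R M), IsCompl A₁ B₁ → IsCompl A₂ B₂ →
      Nonempty (↥A₁ ≃ₗ[R] ↥A₂) → Nonempty (↥B₁ ≃ₗ[R] ↥B₂) :=
  stmt14_general hur hiso
end

section
/- Let R be the ring of eventually constant sequences of elements of 𝔽₂. Then R as a right module over itself is automorphism-invariant but not self-injective: its injective hull is the full product ∏_{n ∈ ℕ} 𝔽₂, whose only ring-module automorphism is the identity. -/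
/-- The subring of eventually constant sequences of elements of 𝔽₂. -/
def evConst : Subring (ℕ → ZMod 2) where
  carrier := {f | ∃ N : ℕ, ∃ c : ZMod 2, ∀ n : ℕ, N ≤ n → f n = c}
  zero_mem' := ⟨0, 0, fun _ _ => rfl⟩
  one_mem' := ⟨0, 1, fun _ _ => rfl⟩
  add_mem' := by
    rintro f g ⟨N₁, c₁, h₁⟩ ⟨N₂, c₂, h₂⟩
    exact ⟨max N₁ N₂, c₁ + c₂, fun n hn => by
      simp [h₁ n (le_trans (le_max_left _ _) hn), h₂ n (le_trans (le_max_right _ _) hn)]⟩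
  mul_mem' := by
    rintro f g ⟨N₁, c₁, h₁⟩ ⟨N₂, c₂, h₂⟩
    exact ⟨max N₁ N₂, c₁ * c₂, fun n hn => by
      simp [h₁ n (le_trans (le_max_left _ _) hn), h₂ n (le_trans (le_max_right _ _) hn)]⟩
  neg_mem' := by
    rintro f ⟨N, c, h⟩
    exact ⟨N, -c, fun n hn => by simp [h n hn]⟩

/-- The ring `evConst`, viewed as a submodule (over itself) of the full product. -/
def evConstSubmodule : Submodule ↥evConst (ℕ → ZMod 2) where
  carrier := evConst
  zero_mem' := evConst.zero_mem
  add_mem' := fun hf hg => evConst.add_mem hf hg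
  smul_mem' := fun r x hx => by
    first
    | exact evConst.mul_mem r.2 hx
    | simpa [Algebra.smul_def] using evConst.mul_mem r.2 hx


/-!
Let `S` be any subring of `ι → 𝔽₂` containing the coordinate idempotents `Pi.single i 1`.
Multiplying by them reads off coordinates, `Pi.single i 1 • x = Pi.single i (x i)`, and
`x i ∈ {0, 1}`; hence the `i`-th coordinate of `f x`, for an `S`-linear map `f`, is `x i` times a
constant depending only on `i`, i.e. `f` is multiplication by a fixed sequence. On an ideal of `S`
this gives Baer's criterion for `ι → 𝔽₂`; for an automorphism the sequence is a unit, hence `1`.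
-/

lemma ZMod.two_eq_zero_or_eq_one (a : ZMod 2) : a = 0 ∨ a = 1 := by
  revert a; decide

section SingleMem

variable {ι : Type*} [DecidableEq ι] {S : Subring (ι → ZMod 2)}

lemma single_one_smul_eq (hS : ∀ i, Pi.single i 1 ∈ S) (i : ι) (x : ι → ZMod 2) :
    (⟨Pi.single i 1, hS i⟩ : S) • x = Pi.single i (x i) := by
  change Pi.single i 1 * x = _
  rw [← Pi.single_mul_left, one_mul]

lemma linearMap_apply_eq_apply_single_one_smul (hS : ∀ i, Pi.single i 1 ∈ S)
    {M : Type*} [AddCommGroup M] [Module S M]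
    (f : M →ₗ[S] ι → ZMod 2) (x : M) (i : ι) :
    f x i = f ((⟨Pi.single i 1, hS i⟩ : S) • x) i := by
  rw [map_smul, single_one_smul_eq hS, Pi.single_eq_same]

lemma linearMap_apply_eq_mul (hS : ∀ i, Pi.single i 1 ∈ S) (f : (ι → ZMod 2) →ₗ[S] ι → ZMod 2)
    (x : ι → ZMod 2) :
    f x = x * f 1 := by
  funext i
  rw [Pi.mul_apply, linearMap_apply_eq_apply_single_one_smul hS f x,
    linearMap_apply_eq_apply_single_one_smul hS f 1, single_one_smul_eq hS,
    single_one_smul_eq hS]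
  rcases (x i).two_eq_zero_or_eq_one with h | h <;> simp [h]

lemma linearEquiv_eq_refl (hS : ∀ i, Pi.single i 1 ∈ S) (φ : (ι → ZMod 2) ≃ₗ[S] ι → ZMod 2) :
    φ = LinearEquiv.refl S (ι → ZMod 2) := by
  have hφ : ∀ x, φ x = x * φ 1 := linearMap_apply_eq_mul hS φ.toLinearMap
  have hφ1 : φ 1 = 1 := by
    obtain ⟨x, hx⟩ := φ.surjective 1
    funext i
    have hi := congrFun ((hφ x).symm.trans hx) i
    rcases (φ 1 i).two_eq_zero_or_eq_one with h | h
    · simp [h] at hi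
    · exact h
  ext x
  rw [hφ, hφ1, mul_one]
  rfl

lemma baer_of_single_one_mem (hS : ∀ i, Pi.single i 1 ∈ S) : Module.Baer S (ι → ZMod 2) := by
  classical
  intro I g
  let δ (i : ι) : S := ⟨Pi.single i 1, hS i⟩
  let c : ι → ZMod 2 := fun i => if h : δ i ∈ I then g ⟨δ i, h⟩ i else 0
  refine ⟨LinearMap.toSpanSingleton S _ c, fun x hx => funext fun i => ?_⟩
  have hδx : ((δ i • ⟨x, hx⟩ : I) : ι → ZMod 2) = Pi.single i ((x : ι → ZMod 2) i) :=
    single_one_smul_eq hS i x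
  rw [linearMap_apply_eq_apply_single_one_smul hS g, LinearMap.toSpanSingleton_apply]
  change (x : ι → ZMod 2) i * c i = g (δ i • ⟨x, hx⟩) i
  rcases ((x : ι → ZMod 2) i).two_eq_zero_or_eq_one with h | h
  · have h0 : δ i • (⟨x, hx⟩ : I) = 0 := by
      ext1; ext1; rw [hδx, h, Pi.single_zero]; rfl
    rw [h0, map_zero, h, zero_mul]
    rfl
  · have hδ : δ i ∈ I := by
      have : δ i * x = δ i := Subtype.ext (hδx.trans (congrArg _ h))
      exact this ▸ I.mul_mem_left _ hx
    have h1 : δ i • (⟨x, hx⟩ : I) = ⟨δ i, hδ⟩ :=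
      Subtype.ext (Subtype.ext (hδx.trans (congrArg _ h)))
    rw [h1, h, one_mul]
    exact dif_pos hδ

lemma isEssential_of_single_one_mem (hS : ∀ i, Pi.single i 1 ∈ S) (N : Submodule S (ι → ZMod 2))
    (hN : ∀ i, Pi.single i 1 ∈ N) : IsEssential N := by
  intro K hK
  obtain ⟨x, hxK, hx0⟩ := K.exists_mem_ne_zero_of_ne_bot hK
  obtain ⟨i, hi⟩ := Function.ne_iff.mp hx0
  have hxi : x i = 1 := (x i).two_eq_zero_or_eq_one.resolve_left hi
  have hK : Pi.single i 1 ∈ K := by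
    simpa [single_one_smul_eq hS, hxi] using K.smul_mem ⟨Pi.single i 1, hS i⟩ hxK
  rw [Submodule.ne_bot_iff]
  exact ⟨Pi.single i 1, ⟨hN i, hK⟩, by simp⟩

end SingleMem

lemma single_one_mem_evConst (i : ℕ) : Pi.single i 1 ∈ evConst :=
  ⟨i + 1, 0, fun _ hn => Pi.single_eq_of_ne (by omega) _⟩

lemma evConstSubmodule_ne_top : evConstSubmodule ≠ ⊤ := by
  intro h
  have hmem : (fun n => if Even n then 1 else 0 : ℕ → ZMod 2) ∈ evConstSubmodule := h ▸ trivial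
  obtain ⟨N, c, hc⟩ := hmem
  have h1 : (1 : ZMod 2) = c := by simpa using hc (2 * N) (by omega)
  have h0 : (0 : ZMod 2) = c := by
    simpa [Nat.even_add_one] using hc (2 * N + 1) (by omega)
  exact one_ne_zero (h1.trans h0.symm)

/-- The ring R of eventually constant sequences over 𝔽₂, as a right module over
itself, is automorphism-invariant but not self-injective: its injective hull is
the full product ∏ 𝔽₂, whose only module automorphism is the identity. -/
theorem stmt17 :
    IsEssential evConstSubmodule ∧
    Module.Injective ↥evConst (ℕ → ZMod 2) ∧
    (∀ φ : (ℕ → ZMod 2) ≃ₗ[↥evConst] (ℕ → ZMod 2),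
      φ = LinearEquiv.refl ↥evConst (ℕ → ZMod 2)) ∧
    (∀ φ : (ℕ → ZMod 2) ≃ₗ[↥evConst] (ℕ → ZMod 2),
      ∀ x ∈ evConstSubmodule, φ x ∈ evConstSubmodule) ∧
    evConstSubmodule ≠ ⊤ :=
  have hS := single_one_mem_evConst
  ⟨isEssential_of_single_one_mem hS _ hS,
    (baer_of_single_one_mem hS).injective,
    linearEquiv_eq_refl hS,
    fun φ x hx => by rwa [linearEquiv_eq_refl hS φ],
    evConstSubmodule_ne_top⟩
end

section
/- Let M be a module satisfying (C2) (submodules isomorphic to direct summands are direct summands), and let a ∈ End(M) have essential kernel. Then 1 - a is a unit in End(M). -/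
/-- If M satisfies (C2) and a ∈ End(M) has essential kernel, then 1 - a is a
unit in End(M). -/
theorem stmt18 {R M : Type*} [Ring R] [AddCommGroup M] [Module R M]
    (hC2 : ∀ N : Submodule R M,
      (∃ D : Submodule R M, (∃ D' : Submodule R M, IsCompl D D') ∧
        Nonempty (↥N ≃ₗ[R] ↥D)) →
      ∃ N' : Submodule R M, IsCompl N N')
    (a : Module.End R M) (ha : IsEssential (LinearMap.ker a)) :
    IsUnit (1 - a) := by
  set b : Module.End R M := 1 - a with hb
  have hbapp : ∀ x : M, b x = x - a x := fun x => rfl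
  have hker : LinearMap.ker b = ⊥ := by
    by_contra h
    apply ha _ h
    rw [eq_bot_iff]
    rintro x ⟨hxa, hxb⟩
    have hxa' : a x = 0 := hxa
    have hxb' : x - a x = 0 := hxb
    have : x = 0 := by rw [hxa', sub_zero] at hxb'; exact hxb'
    simpa using this
  have hinj : Function.Injective b := LinearMap.ker_eq_bot.mp hker
  have hsub : LinearMap.ker a ≤ LinearMap.range b := by
    intro x hx
    exact ⟨x, by rw [hbapp, LinearMap.mem_ker.mp hx, sub_zero]⟩
  have hess : IsEssential (LinearMap.range b) := by
    intro K hK h0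
    apply ha K hK
    rw [eq_bot_iff] at h0 ⊢
    exact le_trans (inf_le_inf_right K hsub) h0
  obtain ⟨N', hN'⟩ := hC2 (LinearMap.range b)
    ⟨⊤, ⟨⊥, isCompl_top_bot⟩,
      ⟨(LinearEquiv.ofInjective b hinj).symm.trans Submodule.topEquiv.symm⟩⟩
  have hN'bot : N' = ⊥ := by
    by_contra hN
    exact hess N' hN (disjoint_iff.mp hN'.disjoint)
  have hrange : LinearMap.range b = ⊤ := by
    have := hN'.sup_eq_top
    rwa [hN'bot, sup_bot_eq] at this
  have hsurj : Function.Surjective b := LinearMap.range_eq_top.mp hrange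
  let e := LinearEquiv.ofBijective b ⟨hinj, hsurj⟩
  exact ⟨⟨b, e.symm.toLinearMap,
    by ext x; exact e.apply_symm_apply x,
    by ext x; exact e.symm_apply_apply x⟩, rfl⟩
end
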